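/- arXiv:2205.13098 — 2 statements merged into one kernel-verified Lean document; each statement's English description precedes it below -/
import Mathlib

section
/- Objective preservation under the feasibility mapping: with S^{(j,±)} constructed from (W, α) as in the feasibility mapping, one has Σⱼ tr(B̃_j(S^{(j,+)} − S^{(j,−)})) = 2Σᵢ₌₁ᵐ αᵢ Σₙ₌₁ᴺ 𝟙(xₙᵀwᵢ ≥ 0)·‖wᵢ‖₂² and Σⱼ tr((S^{(j,+)} + S^{(j,−)})·e_{d+1}e_{d+1}ᵀ) = Σᵢ₌₁ᵐ |αᵢ| = ‖α‖₁, where B̃_j = [[2tr(D_j)I_d, 0],[0,0]] and e_{d+1} is the last standard basis vector of ℝ^{d+1}. -/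
open Matrix

/-- Objective preservation under the feasibility mapping: with
`S^{(j,+)} = Σ_{αᵢ≥0, pattern j} αᵢ[[wᵢwᵢᵀ,wᵢ],[wᵢᵀ,1]]`,
`S^{(j,−)} = −Σ_{αᵢ<0, pattern j} αᵢ[[wᵢwᵢᵀ,wᵢ],[wᵢᵀ,1]]`,
`B̃_j = [[2tr(D_j)I_d,0],[0,0]]`, one has
`Σⱼ tr(B̃_j(S^{(j,+)} − S^{(j,−)})) = 2Σᵢ αᵢ Σₙ 𝟙(xₙᵀwᵢ ≥ 0)‖wᵢ‖²` and
`Σⱼ tr((S^{(j,+)} + S^{(j,−)})e_{d+1}e_{d+1}ᵀ) = ‖α‖₁`. -/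
theorem stmt14 (N d m : ℕ) (X : Matrix (Fin N) (Fin d) ℝ)
    (w : Fin m → Fin d → ℝ) (α : Fin m → ℝ) :
    let patt : Fin m → Fin N → Bool := fun i n => decide (0 ≤ X n ⬝ᵥ w i)
    let M : Fin m → Matrix (Fin d ⊕ Unit) (Fin d ⊕ Unit) ℝ := fun i =>
      Matrix.of fun a b => Sum.elim (w i) (fun _ => 1) a * Sum.elim (w i) (fun _ => 1) b
    let Splus : (Fin N → Bool) → Matrix (Fin d ⊕ Unit) (Fin d ⊕ Unit) ℝ := fun j =>
      ∑ i ∈ Finset.univ.filter fun i => 0 ≤ α i ∧ patt i = j, α i • M i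
    let Sminus : (Fin N → Bool) → Matrix (Fin d ⊕ Unit) (Fin d ⊕ Unit) ℝ := fun j =>
      -∑ i ∈ Finset.univ.filter fun i => α i < 0 ∧ patt i = j, α i • M i
    let Dmat : (Fin N → Bool) → Matrix (Fin N) (Fin N) ℝ := fun j =>
      Matrix.diagonal fun n => if j n then (1 : ℝ) else 0
    let Btilde : (Fin N → Bool) → Matrix (Fin d ⊕ Unit) (Fin d ⊕ Unit) ℝ := fun j =>
      Matrix.fromBlocks ((2 * (Dmat j).trace) • (1 : Matrix (Fin d) (Fin d) ℝ)) 0 0 0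
    let E : Matrix (Fin d ⊕ Unit) (Fin d ⊕ Unit) ℝ := Matrix.fromBlocks 0 0 0 1
    (∑ j : Fin N → Bool, (Btilde j * (Splus j - Sminus j)).trace =
      2 * ∑ i, α i * ∑ n, (if 0 ≤ X n ⬝ᵥ w i then (1 : ℝ) else 0) * ∑ k, (w i k) ^ 2) ∧
    (∑ j : Fin N → Bool, ((Splus j + Sminus j) * E).trace = ∑ i, |α i|) := by
  intro patt M Splus Sminus Dmat Btilde E
  -- trace of Btilde j * M i
  have hM1 : ∀ (j : Fin N → Bool) (i : Fin m),
      (Btilde j * M i).trace = (2 * (Dmat j).trace) * ∑ k, w i k ^ 2 := by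
    intro j i
    simp only [Btilde, M, Matrix.trace, Matrix.diag, Matrix.mul_apply,
      Fintype.sum_sum_type, Matrix.fromBlocks_apply₁₁, Matrix.fromBlocks_apply₁₂,
      Matrix.fromBlocks_apply₂₁, Matrix.fromBlocks_apply₂₂, Matrix.smul_apply,
      Matrix.one_apply, Matrix.zero_apply, Matrix.of_apply, Sum.elim_inl, Sum.elim_inr,
      smul_eq_mul, mul_ite, mul_zero, mul_one, ite_mul, zero_mul,
      Finset.sum_ite_eq, Finset.mem_univ, if_true, Finset.univ_unique,
      Finset.sum_const, zero_add, add_zero, smul_zero]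
    simp only [Finset.mul_sum, Finset.sum_mul]
    apply Finset.sum_congr rfl
    intro k _
    apply Finset.sum_congr rfl
    intro n _
    ring
  have hM2 : ∀ i : Fin m, (M i * E).trace = 1 := by
    intro i
    simp [E, M, Matrix.trace, Matrix.diag, Matrix.mul_apply, Fintype.sum_sum_type]
  -- combining the two sign filters
  have hcomb : ∀ (g : Fin m → ℝ) (j : Fin N → Bool),
      ((∑ i ∈ Finset.univ.filter fun i => 0 ≤ α i ∧ patt i = j, g i)
        + ∑ i ∈ Finset.univ.filter fun i => α i < 0 ∧ patt i = j, g i)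
      = ∑ i ∈ Finset.univ.filter (fun i => patt i = j), g i := by
    intro g j
    rw [← Finset.sum_filter_add_sum_filter_not
      (Finset.univ.filter fun i => patt i = j) (fun i => 0 ≤ α i) g]
    congr 1
    · rw [Finset.filter_filter]
      exact Finset.sum_congr (Finset.filter_congr fun i _ => by simp [and_comm]) fun _ _ => rfl
    · rw [Finset.filter_filter]
      exact Finset.sum_congr (Finset.filter_congr fun i _ => by
        simp [and_comm, not_le]) fun _ _ => rfl
  have fib : ∀ g : Fin m → ℝ,
      (∑ j : Fin N → Bool, ∑ i ∈ Finset.univ.filter (fun i => patt i = j), g i)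
        = ∑ i, g i := fun g => Finset.sum_fiberwise _ _ _
  constructor
  · have h1 : ∀ j : Fin N → Bool, (Btilde j * (Splus j - Sminus j)).trace
        = ∑ i ∈ Finset.univ.filter (fun i => patt i = j),
            α i * ((2 * (Dmat (patt i)).trace) * ∑ k, w i k ^ 2) := by
      intro j
      have e1 : Splus j - Sminus j
          = (∑ i ∈ Finset.univ.filter fun i => 0 ≤ α i ∧ patt i = j, α i • M i)
            + ∑ i ∈ Finset.univ.filter fun i => α i < 0 ∧ patt i = j, α i • M i := by
        simp [Splus, Sminus, sub_neg_eq_add]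
      rw [e1, Matrix.mul_add, Matrix.trace_add, Matrix.mul_sum, Matrix.mul_sum,
        Matrix.trace_sum, Matrix.trace_sum]
      have e2 : ∀ i : Fin m, (Btilde j * (α i • M i)).trace
          = α i * ((2 * (Dmat j).trace) * ∑ k, w i k ^ 2) := by
        intro i
        rw [Matrix.mul_smul, Matrix.trace_smul, hM1, smul_eq_mul]
      simp only [e2]
      rw [hcomb (fun i => α i * ((2 * (Dmat j).trace) * ∑ k, w i k ^ 2)) j]
      refine Finset.sum_congr rfl fun i hi => ?_
      have : patt i = j := by simpa using hi
      rw [this]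
    calc ∑ j : Fin N → Bool, (Btilde j * (Splus j - Sminus j)).trace
        = ∑ j : Fin N → Bool, ∑ i ∈ Finset.univ.filter (fun i => patt i = j),
            α i * ((2 * (Dmat (patt i)).trace) * ∑ k, w i k ^ 2) :=
          Finset.sum_congr rfl fun j _ => h1 j
      _ = ∑ i, α i * ((2 * (Dmat (patt i)).trace) * ∑ k, w i k ^ 2) := fib _
      _ = 2 * ∑ i, α i * ∑ n, (if 0 ≤ X n ⬝ᵥ w i then (1 : ℝ) else 0) * ∑ k, (w i k) ^ 2 := by
          rw [Finset.mul_sum]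
          refine Finset.sum_congr rfl fun i _ => ?_
          have ht : (Dmat (patt i)).trace
              = ∑ n, (if 0 ≤ X n ⬝ᵥ w i then (1 : ℝ) else 0) := by
            simp [Dmat, patt, Matrix.trace_diagonal]
          rw [ht, ← Finset.sum_mul]
          ring
  · have h2 : ∀ j : Fin N → Bool, ((Splus j + Sminus j) * E).trace
        = ∑ i ∈ Finset.univ.filter (fun i => patt i = j), |α i| := by
      intro j
      have ep : Splus j
          = ∑ i ∈ Finset.univ.filter fun i => 0 ≤ α i ∧ patt i = j, |α i| • M i :=
        Finset.sum_congr rfl fun i hi => by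
          rw [abs_of_nonneg (Finset.mem_filter.mp hi).2.1]
      have em : Sminus j
          = ∑ i ∈ Finset.univ.filter fun i => α i < 0 ∧ patt i = j, |α i| • M i := by
        show -∑ i ∈ Finset.univ.filter fun i => α i < 0 ∧ patt i = j, α i • M i = _
        rw [← Finset.sum_neg_distrib]
        refine Finset.sum_congr rfl fun i hi => ?_
        rw [abs_of_neg (Finset.mem_filter.mp hi).2.1, neg_smul]
      rw [ep, em, Matrix.add_mul, Matrix.trace_add, Matrix.sum_mul, Matrix.sum_mul,
        Matrix.trace_sum, Matrix.trace_sum]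
      have e2 : ∀ i : Fin m, ((|α i| • M i) * E).trace = |α i| := by
        intro i
        rw [Matrix.smul_mul, Matrix.trace_smul, hM2, smul_eq_mul, mul_one]
      simp only [e2]
      exact hcomb (fun i => |α i|) j
    calc ∑ j : Fin N → Bool, ((Splus j + Sminus j) * E).trace
        = ∑ j : Fin N → Bool, ∑ i ∈ Finset.univ.filter (fun i => patt i = j), |α i| :=
          Finset.sum_congr rfl fun j _ => h2 j
      _ = ∑ i, |α i| := fib _
end

section
/- If the relaxed dual SDP constraints hold for Λ (i.e. for each j there exist r^{(j,−)}, r^{(j,+)} ≥ 0 with ±(Ã_j(Λ) + B̃_j) + Σₙ rₙ^{(j,∓)}Hₙ^{(j)} + β̃ e_{d+1}e_{d+1}ᵀ ⪰ 0), then Λ satisfies the original dual constraint: for all w with ‖w‖₂ ≤ 1, |Σₙ₌₁ᴺ(‖w‖₂²ψ''(xₙᵀw) − λₙᵀwψ'(xₙᵀw))| ≤ β̃, where ψ(z) = (z₊)² with the convention ψ''(0) = 0. -/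
/-!
Fix `w` with `‖w‖₂ ≤ 1` and take `j` to be its activation pattern, `j n ↔ 0 < xₙᵀw`. Testing
the two certificates for `j` against the vector `(w, 1)` gives
`±wᵀ(A_j + B_j)w + r₀(‖w‖² − 1) + 2 Σₙ rₙ cₙ xₙᵀw + β̃ ≥ 0`. For this pattern
`cₙ xₙᵀw = −|xₙᵀw|`, so every multiplier term is nonpositive, while `wᵀ(A_j + B_j)w` is exactly
the dual sum `Σₙ (‖w‖²ψ''(xₙᵀw) − λₙᵀw ψ'(xₙᵀw))`.
-/

open Matrix

section QuadraticForm

variable {R m n ι : Type*} [CommRing R] [Fintype m] [Fintype n] [Fintype ι]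

theorem Matrix.sumElim_dotProduct_fromBlocks_mulVec (A : Matrix m m R) (B : Matrix m n R)
    (C : Matrix n m R) (D : Matrix n n R) (v : m → R) (u : n → R) :
    Sum.elim v u ⬝ᵥ (fromBlocks A B C D *ᵥ Sum.elim v u) =
      v ⬝ᵥ (A *ᵥ v) + v ⬝ᵥ (B *ᵥ u) + u ⬝ᵥ (C *ᵥ v) + u ⬝ᵥ (D *ᵥ u) := by
  simp only [fromBlocks_mulVec, sumElim_dotProduct_sumElim, Sum.elim_comp_inl,
    Sum.elim_comp_inr, dotProduct_add]
  ring

theorem Matrix.sumElim_one_dotProduct_fromBlocks_replicate_mulVec (x w : m → R) :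
    Sum.elim w 1 ⬝ᵥ
        (fromBlocks 0 (replicateCol Unit x) (replicateRow Unit x) 0 *ᵥ Sum.elim w 1) =
      2 * (x ⬝ᵥ w) := by
  have hcol : replicateCol Unit x *ᵥ 1 = x := by ext; simp [mulVec, dotProduct]
  rw [sumElim_dotProduct_fromBlocks_mulVec, hcol, replicateRow_mulVec_eq_const]
  simp only [zero_mulVec, dotProduct_comm w, zero_dotProduct, zero_add, dotProduct_pUnit,
    Pi.one_apply, Function.const_apply, one_mul, dotProduct_zero, add_zero]
  ring

theorem Matrix.dotProduct_transpose_mul_diagonal_mul_mulVec [DecidableEq ι]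
    (P Q : Matrix ι m R) (δ : ι → R) (w : m → R) :
    w ⬝ᵥ ((Pᵀ * diagonal δ * Q) *ᵥ w) = ∑ i, δ i * (P i ⬝ᵥ w) * (Q i ⬝ᵥ w) := by
  rw [← mulVec_mulVec, ← mulVec_mulVec, dotProduct_mulVec, vecMul_transpose]
  simp only [dotProduct, mulVec_diagonal]
  exact Finset.sum_congr rfl fun i _ => by simp only [mulVec, dotProduct]; ring

/-- The matrix `A_j(Λ) + B_j` of the dual constraint, for `D_j = diagonal δ`. Reducible, so that
its lemmas also rewrite the unfolded matrix that the certificates are stated with. -/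
abbrev dualConstraintMatrix [DecidableEq ι] [DecidableEq m] (X Λ : Matrix ι m R)
    (δ : ι → R) : Matrix m m R :=
  -(Λᵀ * diagonal δ * X) - Xᵀ * diagonal δ * Λ + (2 * (diagonal δ).trace) • 1

theorem dotProduct_dualConstraintMatrix_mulVec [DecidableEq ι] [DecidableEq m]
    (X Λ : Matrix ι m R) (δ : ι → R) (w : m → R) :
    w ⬝ᵥ (dualConstraintMatrix X Λ δ *ᵥ w) = ∑ i, 2 * δ i * (w ⬝ᵥ w - (Λ i ⬝ᵥ w) * (X i ⬝ᵥ w)) := by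
  simp only [add_mulVec, sub_mulVec, neg_mulVec, smul_mulVec, one_mulVec, dotProduct_add,
    dotProduct_sub, dotProduct_neg, dotProduct_smul, smul_eq_mul, trace_diagonal,
    dotProduct_transpose_mul_diagonal_mul_mulVec, Finset.mul_sum, Finset.sum_mul,
    ← Finset.sum_neg_distrib, ← Finset.sum_sub_distrib, ← Finset.sum_add_distrib]
  exact Finset.sum_congr rfl fun i _ => by ring

end QuadraticForm

theorem two_mul_ite_pos_mul_sub (s l t : ℝ) :
    2 * (if 0 < t then 1 else 0) * (s - l * t) =
      s * (if 0 < t then 2 else 0) - l * (2 * max t 0) := by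
  split_ifs with ht
  · rw [max_eq_left ht.le]; ring
  · rw [max_eq_right (not_lt.1 ht)]; ring

theorem one_sub_two_mul_ite_pos_mul_self (t : ℝ) :
    (1 - 2 * if 0 < t then 1 else 0) * t = -|t| := by
  split_ifs with ht
  · rw [abs_of_pos ht]; ring
  · rw [abs_of_nonpos (not_lt.1 ht)]; ring

theorem neg_dotProduct_mulVec_le_of_posSemidef {m ι : Type*} [Fintype m] [DecidableEq m]
    [Fintype ι] {K : Matrix m m ℝ} {r₀ β : ℝ} {r : ι → ℝ} {x : ι → m → ℝ}
    {H : ι → Matrix (m ⊕ Unit) (m ⊕ Unit) ℝ} {w : m → ℝ} (hw : w ⬝ᵥ w ≤ 1) (hr₀ : 0 ≤ r₀)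
    (hr : ∀ i, 0 ≤ r i) (hx : ∀ i, x i ⬝ᵥ w ≤ 0)
    (hH : ∀ i, H i = fromBlocks 0 (replicateCol Unit (x i)) (replicateRow Unit (x i)) 0)
    (hpsd : (fromBlocks K 0 0 0 + r₀ • fromBlocks 1 0 0 (-1) + ∑ i, r i • H i +
      β • fromBlocks 0 0 0 1).PosSemidef) :
    -(w ⬝ᵥ (K *ᵥ w)) ≤ β := by
  have h := hpsd.dotProduct_mulVec_nonneg (Sum.elim w 1)
  simp only [star_trivial, add_mulVec, smul_mulVec, sum_mulVec, dotProduct_add, dotProduct_smul,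
    dotProduct_sum, sumElim_dotProduct_fromBlocks_mulVec, smul_eq_mul, zero_mulVec,
    dotProduct_zero, add_zero, one_mulVec, neg_mulVec, dotProduct_neg, one_dotProduct,
    Finset.univ_unique, Finset.sum_singleton, Pi.one_apply, zero_add, mul_one] at h
  have hball : r₀ * (w ⬝ᵥ w - 1) ≤ 0 := mul_nonpos_of_nonneg_of_nonpos hr₀ (by linarith)
  have hsum : ∑ i, r i * (Sum.elim w 1 ⬝ᵥ (H i *ᵥ Sum.elim w 1)) ≤ 0 :=
    Finset.sum_nonpos fun i _ => mul_nonpos_of_nonneg_of_nonpos (hr i) <| by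
      rw [hH, sumElim_one_dotProduct_fromBlocks_replicate_mulVec]
      linarith [hx i]
  linarith

/-- If `Λ` satisfies the relaxed dual SDP constraints (for each arrangement pattern `j`
there exist `r^{(j,−)}, r^{(j,+)} ≥ 0` with
`±(Ã_j(Λ)+B̃_j) + Σₙ rₙ^{(j,∓)}Hₙ^{(j)} + β̃ e_{d+1}e_{d+1}ᵀ ⪰ 0`), then `Λ` satisfies
the original dual constraint: for all `‖w‖₂ ≤ 1`,
`|Σₙ(‖w‖²ψ''(xₙᵀw) − λₙᵀwψ'(xₙᵀw))| ≤ β̃`, where `ψ(z) = (z₊)²`, `ψ'(z) = 2z₊`,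
`ψ''(z) = 2·𝟙(z>0)` (convention `ψ''(0) = 0`). -/
theorem stmt17 (N d : ℕ) (X Λ : Matrix (Fin N) (Fin d) ℝ) (β' : ℝ)
    (hrelax :
      ∀ j : Fin N → Bool,
        let Dmat : Matrix (Fin N) (Fin N) ℝ :=
          Matrix.diagonal fun n => if j n then (1 : ℝ) else 0
        let Amat : Matrix (Fin d) (Fin d) ℝ := -(Λᵀ * Dmat * X) - Xᵀ * Dmat * Λ
        let Bmat : Matrix (Fin d) (Fin d) ℝ :=
          (2 * Dmat.trace) • (1 : Matrix (Fin d) (Fin d) ℝ)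
        let c : Fin N → ℝ := fun n => 1 - 2 * (if j n then (1 : ℝ) else 0)
        let H0 : Matrix (Fin d ⊕ Unit) (Fin d ⊕ Unit) ℝ := Matrix.fromBlocks 1 0 0 (-1)
        let H : Fin N → Matrix (Fin d ⊕ Unit) (Fin d ⊕ Unit) ℝ := fun n =>
          Matrix.of fun a b =>
            match a, b with
            | Sum.inl a, Sum.inr _ => c n * X n a
            | Sum.inr _, Sum.inl b => c n * X n b
            | _, _ => 0
        let E : Matrix (Fin d ⊕ Unit) (Fin d ⊕ Unit) ℝ := Matrix.fromBlocks 0 0 0 1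
        ∃ r0m : ℝ, ∃ rm : Fin N → ℝ, ∃ r0p : ℝ, ∃ rp : Fin N → ℝ,
          0 ≤ r0m ∧ (∀ n, 0 ≤ rm n) ∧ 0 ≤ r0p ∧ (∀ n, 0 ≤ rp n) ∧
          (Matrix.fromBlocks (Amat + Bmat) 0 0 0 + r0m • H0 + ∑ n, rm n • H n +
            β' • E).PosSemidef ∧
          (Matrix.fromBlocks (-(Amat + Bmat)) 0 0 0 + r0p • H0 + ∑ n, rp n • H n +
            β' • E).PosSemidef) :
    ∀ w : Fin d → ℝ, (∑ k, w k ^ 2) ≤ 1 →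
      |∑ n, ((∑ k, w k ^ 2) * (if 0 < X n ⬝ᵥ w then (2 : ℝ) else 0) -
        (Λ n ⬝ᵥ w) * (2 * max (X n ⬝ᵥ w) 0))| ≤ β' := by
  intro w hw
  obtain ⟨r₀m, rm, r₀p, rp, hr₀m, hrm, hr₀p, hrp, hminus, hplus⟩ :=
    hrelax fun n => decide (0 < X n ⬝ᵥ w)
  simp only [decide_eq_true_eq] at hminus hplus
  have hnorm : w ⬝ᵥ w = ∑ k, w k ^ 2 := by simp only [dotProduct, sq]
  set x : Fin N → Fin d → ℝ := fun n => (1 - 2 * if 0 < X n ⬝ᵥ w then (1 : ℝ) else 0) • X n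
  have hx : ∀ n, x n ⬝ᵥ w ≤ 0 := fun n => by
    simp only [x, smul_dotProduct, smul_eq_mul, one_sub_two_mul_ite_pos_mul_self]
    exact neg_nonpos.2 (abs_nonneg _)
  have hupper := neg_dotProduct_mulVec_le_of_posSemidef (hnorm ▸ hw) hr₀p hrp hx
    (fun n => by ext (a | _) (b | _) <;> rfl) hplus
  have hlower := neg_dotProduct_mulVec_le_of_posSemidef (hnorm ▸ hw) hr₀m hrm hx
    (fun n => by ext (a | _) (b | _) <;> rfl) hminus
  rw [neg_mulVec, dotProduct_neg, neg_neg] at hupper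
  simp only [dotProduct_dualConstraintMatrix_mulVec, two_mul_ite_pos_mul_sub, hnorm]
    at hupper hlower
  exact abs_le.2 ⟨by linarith, hupper⟩
end
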